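/- arXiv:2109.03874 — 3 statements merged into one kernel-verified Lean document; each statement's English description precedes it below -/
import Mathlib

section
/- Let X be an m×n matrix with nonnegative entries, W an m×r matrix with nonnegative entries, and H an r×n matrix with nonnegative entries such that (WᵀWH)_{bj} > 0 for all indices b, j. Define the updated matrix H⁺ by H⁺_{bj} = H_{bj} · (WᵀX)_{bj} / (WᵀWH)_{bj}. Then the squared Frobenius error does not increase: ‖X − W H⁺‖_F² ≤ ‖X − W H‖_F². -/
/-!
Work column by column: for a column `x` of `X` and the matching column `h` of `H`, put
`A = WᵀW`, `v = Wᵀx` and `L = A h`. Up to the constant `‖x‖²` the column error is the quadratic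
`q u = uᵀAu - 2 vᵀu`, and the update is `h⁺ = h ∘ t` with `t = v / L`. Since `A` is symmetric with
nonnegative entries, `2 t_b t_c ≤ t_b² + t_c²` gives Lee and Seung's auxiliary bound
`(h ∘ t)ᵀA(h ∘ t) ≤ ∑_b L_b h_b t_b²`, and with `v_b = L_b t_b` this yields
`q h - q h⁺ ≥ ∑_b L_b h_b (1 - t_b)² ≥ 0`.
-/

open Matrix

variable {ι κ : Type*} [Fintype ι] [Fintype κ]

theorem sum_sq_sub_mulVec {R : Type*} [CommRing R] (W : Matrix ι κ R) (x : ι → R) (u : κ → R) :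
    ∑ i, (x i - (W *ᵥ u) i) ^ 2 = x ⬝ᵥ x + (u ⬝ᵥ ((Wᵀ * W) *ᵥ u) - 2 * ((Wᵀ *ᵥ x) ⬝ᵥ u)) := by
  have hsq : ∑ i, (x i - (W *ᵥ u) i) ^ 2 = (x - W *ᵥ u) ⬝ᵥ (x - W *ᵥ u) := by
    simp only [dotProduct, Pi.sub_apply, sq]
  have hquad : u ⬝ᵥ ((Wᵀ * W) *ᵥ u) = (W *ᵥ u) ⬝ᵥ (W *ᵥ u) := by
    rw [← mulVec_mulVec, dotProduct_mulVec, vecMul_transpose]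
  have hlin : (Wᵀ *ᵥ x) ⬝ᵥ u = x ⬝ᵥ (W *ᵥ u) := by
    rw [mulVec_transpose, dotProduct_mulVec]
  rw [hsq, hquad, hlin, sub_dotProduct, dotProduct_sub, dotProduct_sub,
    dotProduct_comm (W *ᵥ u) x]
  ring

section OrderedField

variable {𝕜 : Type*} [Field 𝕜]

def leeSeungUpdate (A : Matrix κ κ 𝕜) (v h : κ → 𝕜) : κ → 𝕜 :=
  fun b => h b * v b / (A *ᵥ h) b

variable [LinearOrder 𝕜] [IsStrictOrderedRing 𝕜]

theorem dotProduct_mulVec_mul_le_sum {A : Matrix κ κ 𝕜} (hA : A.IsSymm) (hA₀ : ∀ b c, 0 ≤ A b c)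
    {h : κ → 𝕜} (hh : 0 ≤ h) (t : κ → 𝕜) :
    (h * t) ⬝ᵥ (A *ᵥ (h * t)) ≤ ∑ b, (A *ᵥ h) b * h b * t b ^ 2 := by
  set S : κ → κ → 𝕜 := fun b c => A b c * h b * h c
  have hlhs : (h * t) ⬝ᵥ (A *ᵥ (h * t)) = ∑ b, ∑ c, S b c * (t b * t c) := by
    simp only [dotProduct, mulVec, Finset.mul_sum, Pi.mul_apply, S]
    refine Finset.sum_congr rfl fun b _ => Finset.sum_congr rfl fun c _ => ?_
    ring
  have hrhs : ∑ b, (A *ᵥ h) b * h b * t b ^ 2 = ∑ b, ∑ c, S b c * t b ^ 2 := by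
    simp only [mulVec, dotProduct, Finset.sum_mul, S]
    refine Finset.sum_congr rfl fun b _ => Finset.sum_congr rfl fun c _ => ?_
    ring
  have hswap : ∑ b, ∑ c, S b c * t c ^ 2 = ∑ b, ∑ c, S b c * t b ^ 2 := by
    rw [Finset.sum_comm]
    refine Finset.sum_congr rfl fun b _ => Finset.sum_congr rfl fun c _ => ?_
    simp only [S, hA.apply b c]
    ring
  have hgap : 0 ≤ ∑ b, ∑ c, S b c * (t b - t c) ^ 2 :=
    Finset.sum_nonneg fun b _ => Finset.sum_nonneg fun c _ =>
      mul_nonneg (mul_nonneg (mul_nonneg (hA₀ b c) (hh b)) (hh c)) (sq_nonneg _)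
  have hexpand : ∑ b, ∑ c, S b c * (t b - t c) ^ 2
      = ∑ b, ∑ c, S b c * t b ^ 2 + ∑ b, ∑ c, S b c * t c ^ 2
        - 2 * ∑ b, ∑ c, S b c * (t b * t c) := by
    simp only [Finset.mul_sum, ← Finset.sum_add_distrib, ← Finset.sum_sub_distrib]
    refine Finset.sum_congr rfl fun b _ => Finset.sum_congr rfl fun c _ => ?_
    ring
  rw [hlhs, hrhs]
  linarith

theorem quadratic_leeSeungUpdate_le {A : Matrix κ κ 𝕜} (hA : A.IsSymm) (hA₀ : ∀ b c, 0 ≤ A b c)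
    (v : κ → 𝕜) {h : κ → 𝕜} (hh : 0 ≤ h) (hAh : ∀ b, 0 < (A *ᵥ h) b) :
    leeSeungUpdate A v h ⬝ᵥ (A *ᵥ leeSeungUpdate A v h) - 2 * (v ⬝ᵥ leeSeungUpdate A v h)
      ≤ h ⬝ᵥ (A *ᵥ h) - 2 * (v ⬝ᵥ h) := by
  set p := leeSeungUpdate A v h
  set L := A *ᵥ h
  set t : κ → 𝕜 := fun b => v b / L b
  have hp : p = h * t := funext fun b => mul_div_assoc _ _ _
  have hv : ∀ b, v b = L b * t b := fun b => (mul_div_cancel₀ _ (hAh b).ne').symm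
  have hterm : ∀ b, L b * h b * t b ^ 2 - 2 * (v b * p b) ≤ h b * L b - 2 * (v b * h b) := by
    intro b
    rw [hp, Pi.mul_apply, hv b]
    nlinarith [mul_nonneg (mul_nonneg (hAh b).le (hh b)) (sq_nonneg (1 - t b))]
  calc p ⬝ᵥ (A *ᵥ p) - 2 * (v ⬝ᵥ p)
      ≤ ∑ b, L b * h b * t b ^ 2 - 2 * (v ⬝ᵥ p) := by
        rw [hp]; exact sub_le_sub_right (dotProduct_mulVec_mul_le_sum hA hA₀ hh t) _
    _ = ∑ b, (L b * h b * t b ^ 2 - 2 * (v b * p b)) := by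
        rw [Finset.sum_sub_distrib, ← Finset.mul_sum]; rfl
    _ ≤ ∑ b, (h b * L b - 2 * (v b * h b)) := Finset.sum_le_sum fun b _ => hterm b
    _ = h ⬝ᵥ (A *ᵥ h) - 2 * (v ⬝ᵥ h) := by
        rw [Finset.sum_sub_distrib, ← Finset.mul_sum]; rfl

theorem sum_sq_sub_mulVec_leeSeungUpdate_le {W : Matrix ι κ 𝕜} (hW : ∀ i a, 0 ≤ W i a)
    (x : ι → 𝕜) {h : κ → 𝕜} (hh : 0 ≤ h) (hpos : ∀ b, 0 < ((Wᵀ * W) *ᵥ h) b) :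
    ∑ i, (x i - (W *ᵥ leeSeungUpdate (Wᵀ * W) (Wᵀ *ᵥ x) h) i) ^ 2
      ≤ ∑ i, (x i - (W *ᵥ h) i) ^ 2 := by
  have hsymm : (Wᵀ * W).IsSymm := by
    rw [IsSymm, transpose_mul, transpose_transpose]
  have hnonneg : ∀ b c, 0 ≤ (Wᵀ * W) b c := fun b c =>
    Finset.sum_nonneg fun i _ => mul_nonneg (hW i b) (hW i c)
  rw [sum_sq_sub_mulVec, sum_sq_sub_mulVec]
  exact add_le_add_right (quadratic_leeSeungUpdate_le hsymm hnonneg _ hh hpos) _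

end OrderedField

theorem leeSeung_H_update_decreases_frobenius_general
    {m n r : ℕ}
    (X : Matrix (Fin m) (Fin n) ℝ) (W : Matrix (Fin m) (Fin r) ℝ)
    (H Hplus : Matrix (Fin r) (Fin n) ℝ)
    (hW : ∀ i a, 0 ≤ W i a) (hH : ∀ b j, 0 ≤ H b j)
    (hpos : ∀ b j, 0 < (Wᵀ * W * H) b j)
    (hHplus : ∀ b j, Hplus b j = H b j * (Wᵀ * X) b j / ((Wᵀ * W * H) b j)) :
    ∑ i, ∑ j, (X i j - (W * Hplus) i j) ^ 2
      ≤ ∑ i, ∑ j, (X i j - (W * H) i j) ^ 2 := by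
  calc ∑ i, ∑ j, (X i j - (W * Hplus) i j) ^ 2
      = ∑ j, ∑ i, (Xᵀ j i - (W *ᵥ Hplusᵀ j) i) ^ 2 := Finset.sum_comm
    _ ≤ ∑ j, ∑ i, (Xᵀ j i - (W *ᵥ Hᵀ j) i) ^ 2 := Finset.sum_le_sum fun j _ => by
      have hcol : Hplusᵀ j = leeSeungUpdate (Wᵀ * W) (Wᵀ *ᵥ Xᵀ j) (Hᵀ j) :=
        funext fun b => hHplus b j
      rw [hcol]
      exact sum_sq_sub_mulVec_leeSeungUpdate_le hW _ (fun b => hH b j) (fun b => hpos b j)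
    _ = ∑ i, ∑ j, (X i j - (W * H) i j) ^ 2 := Finset.sum_comm

/-- Lee–Seung multiplicative update for `H` does not increase the squared
Frobenius error `‖X - W H‖_F²`. -/
theorem leeSeung_H_update_decreases_frobenius
    {m n r : ℕ}
    (X : Matrix (Fin m) (Fin n) ℝ) (W : Matrix (Fin m) (Fin r) ℝ)
    (H Hplus : Matrix (Fin r) (Fin n) ℝ)
    (hX : ∀ i j, 0 ≤ X i j) (hW : ∀ i a, 0 ≤ W i a) (hH : ∀ b j, 0 ≤ H b j)
    (hpos : ∀ b j, 0 < (Wᵀ * W * H) b j)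
    (hHplus : ∀ b j, Hplus b j = H b j * (Wᵀ * X) b j / ((Wᵀ * W * H) b j)) :
    ∑ i, ∑ j, (X i j - (W * Hplus) i j) ^ 2
      ≤ ∑ i, ∑ j, (X i j - (W * H) i j) ^ 2 :=
  leeSeung_H_update_decreases_frobenius_general X W H Hplus hW hH hpos hHplus
end

section
/- Let X be an m×n matrix with nonnegative entries, W an m×r matrix with nonnegative entries, and H an r×n matrix with nonnegative entries such that (WHHᵀ)_{ia} > 0 for all indices i, a. Define the updated matrix W⁺ by W⁺_{ia} = W_{ia} · (XHᵀ)_{ia} / (WHHᵀ)_{ia}. Then the squared Frobenius error does not increase: ‖X − W⁺ H‖_F² ≤ ‖X − W H‖_F². -/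
/-!
Fix a row `w` of `W`, write `s = w H Hᵀ` and `e = x - w H` for the residual of the matching row
`x` of `X`. The update is `w⁺ = w + w ⊙ u` with `u = (e Hᵀ) / s`, so with `d = w ⊙ u`
the new residual is `e - d H` and
  `‖e - d H‖² = ‖e‖² - 2 ⟨e Hᵀ, d⟩ + d (H Hᵀ) dᵀ`.
The cross term is `T = ∑ₐ sₐ wₐ uₐ²`, and since `H Hᵀ` is symmetric with nonnegative entries
the quadratic term is at most `T` as well (this is the majorization behind the auxiliary
function of Lee and Seung). Hence the squared error drops by at least `T ≥ 0`.
-/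

open Matrix BigOperators

variable {ι κ : Type*} [Fintype ι] [Fintype κ]

theorem dotProduct_mul_mulVec_mul_le {R : Type*} [CommRing R] [LinearOrder R]
    [IsStrictOrderedRing R] (A : Matrix κ κ R) (hA : A.IsSymm) (hA₀ : ∀ a b, 0 ≤ A a b)
    {w : κ → R} (hw : 0 ≤ w) (u : κ → R) :
    (w * u) ⬝ᵥ A *ᵥ (w * u) ≤ ∑ a, (A *ᵥ w) a * w a * u a ^ 2 := by
  have hdiag : ∑ a, (A *ᵥ w) a * w a * u a ^ 2 = ∑ a, ∑ b, A a b * w a * w b * u a ^ 2 := by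
    simp only [mulVec, dotProduct, Finset.sum_mul]
    exact Finset.sum_congr rfl fun a _ => Finset.sum_congr rfl fun b _ => by ring
  have hdiag' : ∑ a, (A *ᵥ w) a * w a * u a ^ 2 = ∑ a, ∑ b, A a b * w a * w b * u b ^ 2 := by
    rw [hdiag, Finset.sum_comm]
    refine Finset.sum_congr rfl fun a _ => Finset.sum_congr rfl fun b _ => ?_
    rw [hA.apply a b]
    ring
  have hquad : (w * u) ⬝ᵥ A *ᵥ (w * u) = ∑ a, ∑ b, A a b * w a * w b * (u a * u b) := by
    simp only [mulVec, dotProduct, Finset.mul_sum, Pi.mul_apply]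
    exact Finset.sum_congr rfl fun a _ => Finset.sum_congr rfl fun b _ => by ring
  have hsos : 0 ≤ ∑ a, ∑ b, A a b * w a * w b * (u a - u b) ^ 2 :=
    Finset.sum_nonneg fun a _ => Finset.sum_nonneg fun b _ =>
      mul_nonneg (mul_nonneg (mul_nonneg (hA₀ a b) (hw a)) (hw b)) (sq_nonneg _)
  have hexpand : ∑ a, ∑ b, A a b * w a * w b * (u a - u b) ^ 2
      = ∑ a, ∑ b, A a b * w a * w b * u a ^ 2 + ∑ a, ∑ b, A a b * w a * w b * u b ^ 2
        - 2 * ∑ a, ∑ b, A a b * w a * w b * (u a * u b) := by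
    simp only [Finset.mul_sum, ← Finset.sum_add_distrib, ← Finset.sum_sub_distrib]
    exact Finset.sum_congr rfl fun a _ => Finset.sum_congr rfl fun b _ => by ring
  rw [hquad]
  linarith

theorem sub_dotProduct_sub_self {R : Type*} [CommRing R] (e v : ι → R) :
    (e - v) ⬝ᵥ (e - v) = e ⬝ᵥ e - 2 * e ⬝ᵥ v + v ⬝ᵥ v := by
  simp only [sub_dotProduct, dotProduct_sub, dotProduct_comm v e]
  ring

theorem vecMul_dotProduct_vecMul_self {R : Type*} [CommRing R] (H : Matrix κ ι R)
    (d : κ → R) : (d ᵥ* H) ⬝ᵥ (d ᵥ* H) = d ⬝ᵥ (H * Hᵀ) *ᵥ d := by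
  rw [← mulVec_mulVec, mulVec_transpose, dotProduct_mulVec]

theorem vecMul_vecMul_transpose {R : Type*} [CommRing R] (H : Matrix κ ι R) (w : κ → R) :
    w ᵥ* H ᵥ* Hᵀ = (H * Hᵀ) *ᵥ w := by
  rw [vecMul_transpose, ← mulVec_transpose, mulVec_mulVec]

theorem leeSeung_update_residual_le {R : Type*} [Field R] [LinearOrder R]
    [IsStrictOrderedRing R] {x : ι → R} {w w' : κ → R} {H : Matrix κ ι R} (hw : 0 ≤ w)
    (hH : ∀ b j, 0 ≤ H b j) (hpos : ∀ a, 0 < (w ᵥ* H ᵥ* Hᵀ) a)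
    (hw' : ∀ a, w' a = w a * (x ᵥ* Hᵀ) a / (w ᵥ* H ᵥ* Hᵀ) a) :
    (x - w' ᵥ* H) ⬝ᵥ (x - w' ᵥ* H) ≤ (x - w ᵥ* H) ⬝ᵥ (x - w ᵥ* H) := by
  rw [vecMul_vecMul_transpose] at hpos hw'
  set s := (H * Hᵀ) *ᵥ w
  set e := x - w ᵥ* H
  set u := (e ᵥ* Hᵀ) / s
  set T := ∑ a, s a * w a * u a ^ 2
  have hgrad : e ᵥ* Hᵀ = s * u := by
    funext a
    simp only [u, Pi.mul_apply, Pi.div_apply]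
    field_simp [(hpos a).ne']
  have hupdate : w' = w + w * u := by
    funext a
    have hxa : (x ᵥ* Hᵀ) a = s a * u a + s a := by
      rw [← Pi.mul_apply, ← hgrad, sub_vecMul, vecMul_vecMul_transpose, Pi.sub_apply]
      ring
    rw [hw', hxa, Pi.add_apply, Pi.mul_apply]
    field_simp [(hpos a).ne']
    ring
  have hresidual : x - w' ᵥ* H = e - (w * u) ᵥ* H := by
    rw [hupdate, add_vecMul, sub_add_eq_sub_sub]
  have hcross : e ⬝ᵥ (w * u) ᵥ* H = T := by
    rw [← mulVec_transpose, dotProduct_mulVec, hgrad]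
    simp only [dotProduct, T, Pi.mul_apply]
    exact Finset.sum_congr rfl fun a _ => by ring
  have hquad : ((w * u) ᵥ* H) ⬝ᵥ ((w * u) ᵥ* H) ≤ T := by
    rw [vecMul_dotProduct_vecMul_self]
    have hsymm : (H * Hᵀ).IsSymm := by rw [IsSymm, transpose_mul, transpose_transpose]
    refine dotProduct_mul_mulVec_mul_le _ hsymm (fun a b => ?_) hw u
    exact Finset.sum_nonneg fun j _ => mul_nonneg (hH a j) (hH b j)
  have hT : 0 ≤ T := Finset.sum_nonneg fun a _ =>
    mul_nonneg (mul_nonneg (hpos a).le (hw a)) (sq_nonneg _)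
  rw [hresidual, sub_dotProduct_sub_self, hcross]
  linarith

theorem leeSeung_W_update_decreases_frobenius_general
    {m n r : ℕ}
    (X : Matrix (Fin m) (Fin n) ℝ) (W Wplus : Matrix (Fin m) (Fin r) ℝ)
    (H : Matrix (Fin r) (Fin n) ℝ)
    (hW : ∀ i a, 0 ≤ W i a) (hH : ∀ b j, 0 ≤ H b j)
    (hpos : ∀ i a, 0 < (W * H * Hᵀ) i a)
    (hWplus : ∀ i a, Wplus i a = W i a * (X * Hᵀ) i a / ((W * H * Hᵀ) i a)) :
    ∑ i, ∑ j, (X i j - (Wplus * H) i j) ^ 2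
      ≤ ∑ i, ∑ j, (X i j - (W * H) i j) ^ 2 := by
  refine Finset.sum_le_sum fun i _ => ?_
  have hrow := leeSeung_update_residual_le (x := X i) (hW i) hH (hpos i) (hWplus i)
  simp only [dotProduct, Pi.sub_apply, ← sq] at hrow
  exact hrow

/-- Lee–Seung multiplicative update for `W` does not increase the squared
Frobenius error `‖X - W H‖_F²`. -/
theorem leeSeung_W_update_decreases_frobenius
    {m n r : ℕ}
    (X : Matrix (Fin m) (Fin n) ℝ) (W Wplus : Matrix (Fin m) (Fin r) ℝ)
    (H : Matrix (Fin r) (Fin n) ℝ)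
    (hX : ∀ i j, 0 ≤ X i j) (hW : ∀ i a, 0 ≤ W i a) (hH : ∀ b j, 0 ≤ H b j)
    (hpos : ∀ i a, 0 < (W * H * Hᵀ) i a)
    (hWplus : ∀ i a, Wplus i a = W i a * (X * Hᵀ) i a / ((W * H * Hᵀ) i a)) :
    ∑ i, ∑ j, (X i j - (Wplus * H) i j) ^ 2
      ≤ ∑ i, ∑ j, (X i j - (W * H) i j) ^ 2 :=
  leeSeung_W_update_decreases_frobenius_general X W Wplus H hW hH hpos hWplus
end

section
/- Let X be an m×n matrix with strictly positive entries, W an m×r matrix with nonnegative entries whose columns are normalized so that Σ_i W_{ia} = 1 for every a, and H an r×n matrix with nonnegative entries such that (WH)_{ij} > 0 for all i, j. Define the updated matrix H⁺ by H⁺_{aj} = H_{aj} · Σ_i W_{ia} X_{ij}/(WH)_{ij}, and assume (WH⁺)_{ij} > 0 for all i, j. Then the generalized Kullback–Leibler divergence does not increase: KL(X; WH⁺) ≤ KL(X; WH). -/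
open Matrix BigOperators Real

/-!
Jensen's inequality for `log`, applied to each entry `(W H⁺)ᵢⱼ / (W H)ᵢⱼ` as the mean of
`H⁺ₐⱼ / Hₐⱼ` with weights `Wᵢₐ Hₐⱼ / (W H)ᵢⱼ`, gives
`∑ Xᵢⱼ log ((W H⁺)ᵢⱼ / (W H)ᵢⱼ) ≥ ∑ H⁺ₐⱼ log (H⁺ₐⱼ / Hₐⱼ)`, because the update is exactly
`H⁺ₐⱼ = ∑ᵢ Xᵢⱼ Wᵢₐ Hₐⱼ / (W H)ᵢⱼ`. The right side is at least `∑ (H⁺ₐⱼ - Hₐⱼ)`, which by the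
column normalization of `W` equals `∑ ((W H⁺)ᵢⱼ - (W H)ᵢⱼ)`; and
`KL(X; WH) - KL(X; WH⁺)` is precisely the difference of these two sums.
-/

namespace Real

theorem sum_mul_log_le_log_sum_mul {ι : Type*} (s : Finset ι) {w t : ι → ℝ}
    (hw : ∀ i ∈ s, 0 ≤ w i) (hw₁ : ∑ i ∈ s, w i = 1) (ht : ∀ i ∈ s, w i ≠ 0 → 0 < t i) :
    ∑ i ∈ s, w i * log (t i) ≤ log (∑ i ∈ s, w i * t i) := by
  classical
  -- `log` is concave only on `Ioi 0`, and `t` need not be positive off the support of `w`.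
  have on_support : ∀ f : ι → ℝ, ∑ i ∈ s with w i ≠ 0, w i * f i = ∑ i ∈ s, w i * f i :=
    fun f => Finset.sum_filter_of_ne fun i _ h => left_ne_zero_of_mul h
  rw [← on_support, ← on_support]
  refine strictConcaveOn_log_Ioi.concaveOn.le_map_sum
    (fun i hi => hw i (Finset.mem_filter.1 hi).1) ?_ fun i hi => ?_
  · rwa [Finset.sum_filter_ne_zero]
  · obtain ⟨hi, hwi⟩ := Finset.mem_filter.1 hi
    exact ht i hi hwi

theorem sub_le_mul_log_div {p h : ℝ} (hp : 0 ≤ p) (hh : 0 ≤ h) (hph : h = 0 → p = 0) :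
    p - h ≤ p * log (p / h) := by
  rcases hh.eq_or_lt with rfl | hh
  · simp [hph rfl]
  calc p - h = h * (p / h - 1) := by field_simp
    _ ≤ h * (p / h * log (p / h)) :=
      mul_le_mul_of_nonneg_left (self_sub_one_le_mul_log (div_nonneg hp hh.le)) hh.le
    _ = p * log (p / h) := by field_simp

end Real

namespace Matrix

variable {ι κ ρ : Type*} [Fintype ρ]

theorem sum_sum_mul_of_sum_col_eq_one [Fintype ι] [Fintype κ] {W : Matrix ι ρ ℝ}
    (hW : ∀ a, ∑ i, W i a = 1) (M : Matrix ρ κ ℝ) : ∑ i, ∑ j, (W * M) i j = ∑ a, ∑ j, M a j := by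
  simp only [mul_apply]
  rw [Finset.sum_comm]
  simp_rw [Finset.sum_comm (γ := ι), ← Finset.sum_mul, hW, one_mul]
  exact Finset.sum_comm

theorem sum_mul_div_mul_log_div_le_log_mul_div (W : Matrix ι ρ ℝ) {H H' : Matrix ρ κ ℝ}
    {i : ι} {j : κ} (hW : ∀ a, 0 ≤ W i a) (hH : ∀ a, 0 ≤ H a j) (hWH : 0 < (W * H) i j)
    (hH'_zero : ∀ a, H a j = 0 → H' a j = 0) (hH'_pos : ∀ a, W i a * H a j ≠ 0 → 0 < H' a j) :
    ∑ a, W i a * H a j / (W * H) i j * log (H' a j / H a j)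
      ≤ log ((W * H') i j / (W * H) i j) := by
  have mean : ∑ a, W i a * H a j / (W * H) i j * (H' a j / H a j)
      = (W * H') i j / (W * H) i j := by
    rw [mul_apply (M := W) (N := H'), Finset.sum_div]
    refine Finset.sum_congr rfl fun a _ => ?_
    by_cases ha : H a j = 0
    · simp [ha, hH'_zero a ha]
    · field_simp
  rw [← mean]
  refine sum_mul_log_le_log_sum_mul _ (fun a _ => by have := hW a; have := hH a; positivity)
    ?_ fun a _ ha => ?_
  · rw [← Finset.sum_div, div_eq_one_iff_eq hWH.ne', mul_apply]
  · have hWH_ne : W i a * H a j ≠ 0 := (div_ne_zero_iff.1 ha).1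
    exact div_pos (hH'_pos a hWH_ne) ((hH a).lt_of_ne' (right_ne_zero_of_mul hWH_ne))

noncomputable def gkldUpdate [Fintype ι] (X : Matrix ι κ ℝ) (W : Matrix ι ρ ℝ)
    (H : Matrix ρ κ ℝ) : Matrix ρ κ ℝ :=
  of fun a j => H a j * ∑ i, W i a * X i j / (W * H) i j

section gkldUpdate

variable [Fintype ι] {X : Matrix ι κ ℝ} {W : Matrix ι ρ ℝ} {H : Matrix ρ κ ℝ}

theorem gkldUpdate_eq_zero {a : ρ} {j : κ} (h : H a j = 0) : gkldUpdate X W H a j = 0 := by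
  simp [gkldUpdate, h]

theorem gkldUpdate_nonneg (hX : ∀ i j, 0 ≤ X i j) (hW : ∀ i a, 0 ≤ W i a)
    (hH : ∀ a j, 0 ≤ H a j) (a : ρ) (j : κ) : 0 ≤ gkldUpdate X W H a j := by
  have hWH : ∀ i, 0 ≤ (W * H) i j := fun i =>
    Finset.sum_nonneg fun b _ => mul_nonneg (hW i b) (hH b j)
  exact mul_nonneg (hH a j) <| Finset.sum_nonneg fun i _ =>
    div_nonneg (mul_nonneg (hW i a) (hX i j)) (hWH i)

theorem gkldUpdate_pos (hX : ∀ i j, 0 < X i j) (hW : ∀ i a, 0 ≤ W i a)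
    (hWH : ∀ i j, 0 < (W * H) i j) {i : ι} {a : ρ} {j : κ} (hWia : 0 < W i a)
    (hHaj : 0 < H a j) : 0 < gkldUpdate X W H a j := by
  have term_nonneg : ∀ i', 0 ≤ W i' a * X i' j / (W * H) i' j := fun i' =>
    div_nonneg (mul_nonneg (hW i' a) (hX i' j).le) (hWH i' j).le
  refine mul_pos hHaj ((div_pos (mul_pos hWia (hX i j)) (hWH i j)).trans_le ?_)
  exact Finset.single_le_sum (fun i' _ => term_nonneg i') (Finset.mem_univ i)

theorem sum_mul_mul_div_eq_gkldUpdate (a : ρ) (j : κ) :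
    ∑ i, X i j * (W i a * H a j / (W * H) i j) = gkldUpdate X W H a j := by
  simp only [gkldUpdate, of_apply, Finset.mul_sum]
  exact Finset.sum_congr rfl fun i _ => by ring

theorem sum_gkldUpdate_mul_log_div_le [Fintype κ] (hX : ∀ i j, 0 < X i j)
    (hW : ∀ i a, 0 ≤ W i a) (hH : ∀ a j, 0 ≤ H a j) (hWH : ∀ i j, 0 < (W * H) i j) :
    ∑ a, ∑ j, gkldUpdate X W H a j * log (gkldUpdate X W H a j / H a j)
      ≤ ∑ i, ∑ j, X i j * log ((W * gkldUpdate X W H) i j / (W * H) i j) := by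
  set U := gkldUpdate X W H
  calc ∑ a, ∑ j, U a j * log (U a j / H a j)
      = ∑ a, ∑ j, ∑ i, X i j * (W i a * H a j / (W * H) i j) * log (U a j / H a j) := by
        simp only [← Finset.sum_mul, sum_mul_mul_div_eq_gkldUpdate, U]
    _ = ∑ i, ∑ j, X i j * ∑ a, W i a * H a j / (W * H) i j * log (U a j / H a j) := by
        simp only [Finset.mul_sum, mul_assoc]
        exact (Finset.sum_comm.trans (Finset.sum_congr rfl fun _ _ => Finset.sum_comm)).trans
          Finset.sum_comm
    _ ≤ _ := by
      refine Finset.sum_le_sum fun i _ => Finset.sum_le_sum fun j _ =>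
        mul_le_mul_of_nonneg_left ?_ (hX i j).le
      refine sum_mul_div_mul_log_div_le_log_mul_div W (hW i) (fun a => hH a j) (hWH i j)
        (fun a => gkldUpdate_eq_zero) fun a ha => ?_
      obtain ⟨hWia, hHaj⟩ := mul_ne_zero_iff.1 ha
      exact gkldUpdate_pos hX hW hWH ((hW i a).lt_of_ne' hWia) ((hH a j).lt_of_ne' hHaj)

end gkldUpdate

noncomputable def genKLDiv [Fintype ι] [Fintype κ] (X Y : Matrix ι κ ℝ) : ℝ :=
  ∑ i, ∑ j, (X i j * log (X i j / Y i j) - X i j + Y i j)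

theorem genKLDiv_le_genKLDiv_of_sum_sub_le_sum_mul_log [Fintype ι] [Fintype κ]
    {X A B : Matrix ι κ ℝ} (hX : ∀ i j, 0 < X i j) (hA : ∀ i j, 0 < A i j)
    (hB : ∀ i j, 0 < B i j)
    (h : ∑ i, ∑ j, (B i j - A i j) ≤ ∑ i, ∑ j, X i j * log (B i j / A i j)) :
    genKLDiv X B ≤ genKLDiv X A := by
  have diff : genKLDiv X A - genKLDiv X B
      = ∑ i, ∑ j, X i j * log (B i j / A i j) - ∑ i, ∑ j, (B i j - A i j) := by
    simp only [genKLDiv, ← Finset.sum_sub_distrib]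
    refine Finset.sum_congr rfl fun i _ => Finset.sum_congr rfl fun j _ => ?_
    rw [log_div (hX i j).ne' (hA i j).ne', log_div (hX i j).ne' (hB i j).ne',
      log_div (hB i j).ne' (hA i j).ne']
    ring
  linarith

end Matrix

/-- The divergence-based (GKLD) Lee–Seung multiplicative update for `H` (with
column-normalized `W`) does not increase the generalized Kullback–Leibler
divergence `KL(X; WH)`. -/
theorem gkld_H_update_decreases_KL
    {m n r : ℕ}
    (X : Matrix (Fin m) (Fin n) ℝ) (W : Matrix (Fin m) (Fin r) ℝ)
    (H Hplus : Matrix (Fin r) (Fin n) ℝ)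
    (hX : ∀ i j, 0 < X i j) (hW : ∀ i a, 0 ≤ W i a)
    (hWnorm : ∀ a, ∑ i, W i a = 1) (hH : ∀ a j, 0 ≤ H a j)
    (hWH : ∀ i j, 0 < (W * H) i j)
    (hHplus : ∀ a j, Hplus a j = H a j * ∑ i, W i a * X i j / (W * H) i j)
    (hWHplus : ∀ i j, 0 < (W * Hplus) i j) :
    ∑ i, ∑ j, (X i j * Real.log (X i j / (W * Hplus) i j)
        - X i j + (W * Hplus) i j)
      ≤ ∑ i, ∑ j, (X i j * Real.log (X i j / (W * H) i j)
        - X i j + (W * H) i j) := by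
  obtain rfl : Hplus = gkldUpdate X W H := Matrix.ext hHplus
  refine genKLDiv_le_genKLDiv_of_sum_sub_le_sum_mul_log hX hWH hWHplus ?_
  calc ∑ i, ∑ j, ((W * gkldUpdate X W H) i j - (W * H) i j)
      = ∑ a, ∑ j, (gkldUpdate X W H a j - H a j) := by
        simp only [Finset.sum_sub_distrib, sum_sum_mul_of_sum_col_eq_one hWnorm]
    _ ≤ ∑ a, ∑ j, gkldUpdate X W H a j * log (gkldUpdate X W H a j / H a j) :=
        Finset.sum_le_sum fun a _ => Finset.sum_le_sum fun j _ =>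
          sub_le_mul_log_div (gkldUpdate_nonneg (fun i j => (hX i j).le) hW hH a j) (hH a j)
            gkldUpdate_eq_zero
    _ ≤ _ := sum_gkldUpdate_mul_log_div_le hX hW hH hWH
end
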